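/- arXiv:1809.10965 — 5 statements merged into one kernel-verified Lean document; each statement's English description precedes it below -/
import Mathlib

section
/- The pair (I_W, d_{I_W}) is a matrix factorisation of W(x′) − W(x): the endomorphism d_{I_W} := Σ_{i=1}^n ( ∂_{[i]}W • L_i + (x′_i − x_i) • C_i ) of the exterior algebra ⋀(k[x,x′]^n) satisfies d_{I_W} ∘ d_{I_W} = (W(x′_1,…,x′_n) − W(x_1,…,x_n)) • id. -/
/-!
Write the differential as `d = (ι D ∧ ·) + δ`, where `D = ∑ ∂_{[i]}W e_i` and
`δ = ∑ (x′_i − x_i) C_i` is an odd derivation with `δ (ι m) = f m := ∑ (x′_i − x_i) m_i`.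
Since `ι D` anticommutes with every `ι m`, `d` obeys the same rule
`d (ι m * ω) = f m • ω - ι m * d ω`, so `d ∘ d` commutes with left multiplication by the
generators and is multiplication by `d (d 1) = d (ι D) = f D - ι D * ι D = f D`.
Finally `f D = ∑ (x′_i − x_i) ∂_{[i]}W` telescopes to `W_0 - W_n = W(x′) - W(x)`.
-/

open MvPolynomial ExteriorAlgebra

/-- The polynomial `W_i ∈ k[x,x′]`, the image of `W` under the `k`-algebra map sending
`x_j ↦ x_j` for `j ≤ i` (1-indexed, i.e. `j.val < i` 0-indexed) and `x_j ↦ x′_j` for `j > i`. -/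
noncomputable def Wi {k : Type*} [CommRing k] {n : ℕ} (W : MvPolynomial (Fin n) k) (i : ℕ) :
    MvPolynomial (Fin n ⊕ Fin n) k :=
  aeval (fun j : Fin n =>
    if (j : ℕ) < i then X (Sum.inl j) else X (Sum.inr j)) W

namespace ExteriorAlgebra

variable {R M : Type*} [CommRing R] [AddCommGroup M] [Module R M]

section Koszul

variable {a : M} {f : M → R} {δ : Module.End R (ExteriorAlgebra R M)}

theorem mulLeft_ι_add_apply_ι_mul
    (hδ : ∀ m ω, δ (ι R m * ω) = f m • ω - ι R m * δ ω) (m : M) (ω : ExteriorAlgebra R M) :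
    (LinearMap.mulLeft R (ι R a) + δ) (ι R m * ω)
      = f m • ω - ι R m * (LinearMap.mulLeft R (ι R a) + δ) ω := by
  simp only [LinearMap.add_apply, LinearMap.mulLeft_apply, hδ, ← mul_assoc,
    CliffordAlgebra.ι_mul_ι_comm_of_isOrtho (.all a m), neg_mul, mul_add]
  abel

theorem mulLeft_ι_add_comp_self (hδ1 : δ 1 = 0)
    (hδ : ∀ m ω, δ (ι R m * ω) = f m • ω - ι R m * δ ω) :
    (LinearMap.mulLeft R (ι R a) + δ) ∘ₗ (LinearMap.mulLeft R (ι R a) + δ)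
      = f a • LinearMap.id := by
  set d := LinearMap.mulLeft R (ι R a) + δ
  have hd := mulLeft_ι_add_apply_ι_mul (a := a) hδ
  have hd1 : d 1 = ι R a := by simp [d, hδ1]
  have hdd1 : d (d 1) = f a • 1 := by
    rw [hd1, ← mul_one (ι R a), hd, hd1, ι_sq_zero, sub_zero]
  refine LinearMap.ext fun ω => ?_
  change d (d ω) = f a • ω
  induction ω using CliffordAlgebra.left_induction with
  | algebraMap r =>
    rw [Algebra.algebraMap_eq_smul_one, map_smul, map_smul, hdd1, smul_comm]
  | add x y hx hy => rw [map_add, map_add, hx, hy, smul_add]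
  | ι_mul x m hx =>
    change d (d (ι R m * x)) = f a • (ι R m * x)
    rw [hd, map_sub, map_smul, hd, hx, sub_sub_cancel, mul_smul_comm]

end Koszul

theorem sum_smul_apply_ι_mul {κ : Type*} (s : Finset κ) (c : κ → R) (φ : κ → M → R)
    (C : κ → Module.End R (ExteriorAlgebra R M))
    (hC : ∀ i m ω, C i (ι R m * ω) = φ i m • ω - ι R m * C i ω) (m : M)
    (ω : ExteriorAlgebra R M) :
    (∑ i ∈ s, c i • C i) (ι R m * ω)
      = (∑ i ∈ s, c i * φ i m) • ω - ι R m * (∑ i ∈ s, c i • C i) ω := by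
  simp only [LinearMap.sum_apply, LinearMap.smul_apply, hC, smul_sub, Finset.mul_sum,
    Finset.sum_smul, mul_smul, mul_smul_comm, Finset.sum_sub_distrib]

variable {n : ℕ}

theorem sum_smul_mulLeft_ι_single (D : Fin n → R) :
    ∑ i, D i • LinearMap.mulLeft R (ι R (Pi.single i (1 : R)))
      = LinearMap.mulLeft R (ι R D) := by
  refine LinearMap.ext fun ω => ?_
  simp only [LinearMap.sum_apply, LinearMap.smul_apply, LinearMap.mulLeft_apply,
    ← smul_mul_assoc, ← Finset.sum_mul, ← map_smul, ← map_sum, ← pi_eq_sum_univ' D]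

end ExteriorAlgebra

section Wi

variable {k : Type*} [CommRing k] {n : ℕ}

theorem Wi_zero (W : MvPolynomial (Fin n) k) : Wi W 0 = rename Sum.inr W := by
  simp [Wi, rename_eq_aeval, Function.comp_def]

theorem Wi_self (W : MvPolynomial (Fin n) k) : Wi W n = rename Sum.inl W := by
  simp [Wi, rename_eq_aeval, Function.comp_def]

theorem sum_sub_mul_eq_rename_sub_rename (W : MvPolynomial (Fin n) k)
    (D : Fin n → MvPolynomial (Fin n ⊕ Fin n) k)
    (hD : ∀ i : Fin n, (X (Sum.inr i) - X (Sum.inl i)) * D i = Wi W i.val - Wi W (i.val + 1)) :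
    ∑ i, (X (Sum.inr i) - X (Sum.inl i)) * D i = rename Sum.inr W - rename Sum.inl W := by
  simp only [hD]
  rw [Fin.sum_univ_eq_sum_range (fun j => Wi W j - Wi W (j + 1)), Finset.sum_range_sub',
    Wi_zero, Wi_self]

end Wi

theorem unit_matrix_factorisation_general
    {k : Type*} [Field k] {n : ℕ}
    (W : MvPolynomial (Fin n) k)
    (D : Fin n → MvPolynomial (Fin n ⊕ Fin n) k)
    (hD : ∀ i : Fin n,
      (X (Sum.inr i) - X (Sum.inl i)) * D i = Wi W i.val - Wi W (i.val + 1))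
    (C : Fin n → Module.End (MvPolynomial (Fin n ⊕ Fin n) k)
      (ExteriorAlgebra (MvPolynomial (Fin n ⊕ Fin n) k)
        (Fin n → MvPolynomial (Fin n ⊕ Fin n) k)))
    (hC1 : ∀ i : Fin n, C i 1 = 0)
    (hC2 : ∀ (i : Fin n) (m : Fin n → MvPolynomial (Fin n ⊕ Fin n) k)
      (ω : ExteriorAlgebra (MvPolynomial (Fin n ⊕ Fin n) k)
        (Fin n → MvPolynomial (Fin n ⊕ Fin n) k)),
      C i ((ExteriorAlgebra.ι (MvPolynomial (Fin n ⊕ Fin n) k) m) * ω)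
        = m i • ω - (ExteriorAlgebra.ι (MvPolynomial (Fin n ⊕ Fin n) k) m) * C i ω) :
    (∑ i : Fin n,
        (D i • LinearMap.mulLeft (MvPolynomial (Fin n ⊕ Fin n) k)
            (ExteriorAlgebra.ι (MvPolynomial (Fin n ⊕ Fin n) k)
              (Pi.single i (1 : MvPolynomial (Fin n ⊕ Fin n) k)))
          + ((X (Sum.inr i) - X (Sum.inl i) : MvPolynomial (Fin n ⊕ Fin n) k)) • C i))
      ∘ₗ (∑ i : Fin n,
        (D i • LinearMap.mulLeft (MvPolynomial (Fin n ⊕ Fin n) k)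
            (ExteriorAlgebra.ι (MvPolynomial (Fin n ⊕ Fin n) k)
              (Pi.single i (1 : MvPolynomial (Fin n ⊕ Fin n) k)))
          + ((X (Sum.inr i) - X (Sum.inl i) : MvPolynomial (Fin n ⊕ Fin n) k)) • C i))
      = (rename Sum.inr W - rename Sum.inl W) •
          (LinearMap.id : Module.End (MvPolynomial (Fin n ⊕ Fin n) k)
            (ExteriorAlgebra (MvPolynomial (Fin n ⊕ Fin n) k)
              (Fin n → MvPolynomial (Fin n ⊕ Fin n) k))) := by
  set s : Fin n → MvPolynomial (Fin n ⊕ Fin n) k := fun i => X (Sum.inr i) - X (Sum.inl i)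
  have hδ1 : (∑ i, s i • C i) 1 = 0 := by simp [hC1]
  rw [Finset.sum_add_distrib, sum_smul_mulLeft_ι_single,
    mulLeft_ι_add_comp_self hδ1 (sum_smul_apply_ι_mul _ s (fun i m => m i) C hC2),
    sum_sub_mul_eq_rename_sub_rename W D hD]

set_option maxHeartbeats 1600000 in
/-- The unit matrix factorisation `(I_W, d_{I_W})`: with `D i = ∂_{[i]}W` the divided
differences of `W`, the endomorphism `d_{I_W} = ∑_i (∂_{[i]}W • L_i + (x′_i − x_i) • C_i)`
of the exterior algebra `⋀(k[x,x′]^n)` squares to `(W(x′) − W(x)) • id`.  Here `L_i`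
is left multiplication by `ι(e_i)` and `C_i` is left contraction with `ε_i` (the odd
derivation with `C_i(1) = 0` and `C_i(ι(m)·ω) = ε_i(m)·ω − ι(m)·C_i(ω)`). -/
theorem unit_matrix_factorisation
    {k : Type*} [Field k] [CharZero k] {n : ℕ} (hn : 1 ≤ n)
    (W : MvPolynomial (Fin n) k)
    (D : Fin n → MvPolynomial (Fin n ⊕ Fin n) k)
    (hD : ∀ i : Fin n,
      (X (Sum.inr i) - X (Sum.inl i)) * D i = Wi W i.val - Wi W (i.val + 1))
    (C : Fin n → Module.End (MvPolynomial (Fin n ⊕ Fin n) k)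
      (ExteriorAlgebra (MvPolynomial (Fin n ⊕ Fin n) k)
        (Fin n → MvPolynomial (Fin n ⊕ Fin n) k)))
    (hC1 : ∀ i : Fin n, C i 1 = 0)
    (hC2 : ∀ (i : Fin n) (m : Fin n → MvPolynomial (Fin n ⊕ Fin n) k)
      (ω : ExteriorAlgebra (MvPolynomial (Fin n ⊕ Fin n) k)
        (Fin n → MvPolynomial (Fin n ⊕ Fin n) k)),
      C i ((ExteriorAlgebra.ι (MvPolynomial (Fin n ⊕ Fin n) k) m) * ω)
        = m i • ω - (ExteriorAlgebra.ι (MvPolynomial (Fin n ⊕ Fin n) k) m) * C i ω) :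
    (∑ i : Fin n,
        (D i • LinearMap.mulLeft (MvPolynomial (Fin n ⊕ Fin n) k)
            (ExteriorAlgebra.ι (MvPolynomial (Fin n ⊕ Fin n) k)
              (Pi.single i (1 : MvPolynomial (Fin n ⊕ Fin n) k)))
          + ((X (Sum.inr i) - X (Sum.inl i) : MvPolynomial (Fin n ⊕ Fin n) k)) • C i))
      ∘ₗ (∑ i : Fin n,
        (D i • LinearMap.mulLeft (MvPolynomial (Fin n ⊕ Fin n) k)
            (ExteriorAlgebra.ι (MvPolynomial (Fin n ⊕ Fin n) k)
              (Pi.single i (1 : MvPolynomial (Fin n ⊕ Fin n) k)))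
          + ((X (Sum.inr i) - X (Sum.inl i) : MvPolynomial (Fin n ⊕ Fin n) k)) • C i))
      = (rename Sum.inr W - rename Sum.inl W) •
          (LinearMap.id : Module.End (MvPolynomial (Fin n ⊕ Fin n) k)
            (ExteriorAlgebra (MvPolynomial (Fin n ⊕ Fin n) k)
              (Fin n → MvPolynomial (Fin n ⊕ Fin n) k))) :=
  unit_matrix_factorisation_general W D hD C hC1 hC2
end

section
/- Let (X⁰, X¹, x₀, x₁) be a matrix factorisation of f and (Y⁰, Y¹, y₀, y₁) a matrix factorisation of g over R. Define E := (Y⁰ ⊗_R X⁰) ⊕ (Y¹ ⊗_R X¹), O := (Y¹ ⊗_R X⁰) ⊕ (Y⁰ ⊗_R X¹), and R-linear maps d⁰ : E → O, d⁰(u, v) = ((y₀ ⊗ 1)(u) − (1 ⊗ x₁)(v), (1 ⊗ x₀)(u) + (y₁ ⊗ 1)(v)), and d¹ : O → E, d¹(s, t) = ((y₁ ⊗ 1)(s) + (1 ⊗ x₁)(t), −(1 ⊗ x₀)(s) + (y₀ ⊗ 1)(t)). Then d¹ ∘ d⁰ = (f + g) • id_E and d⁰ ∘ d¹ = (f + g)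 • id_O; that is, the graded tensor product with Koszul signs d_{Y⊗X} = d_Y ⊗ 1 + 1 ⊗̂ d_X is a matrix factorisation of f + g. (This underlies both horizontal composition and the monoidal product of the bicategory of Landau-Ginzburg models.) -/
open TensorProduct

/-- The graded tensor product (with Koszul signs) of a matrix factorisation of `f` and a
matrix factorisation of `g` is a matrix factorisation of `f + g`:
with `E = (Y⁰ ⊗ X⁰) ⊕ (Y¹ ⊗ X¹)`, `O = (Y¹ ⊗ X⁰) ⊕ (Y⁰ ⊗ X¹)`,
`d⁰(u,v) = ((y₀ ⊗ 1)u − (1 ⊗ x₁)v, (1 ⊗ x₀)u + (y₁ ⊗ 1)v)` and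
`d¹(s,t) = ((y₁ ⊗ 1)s + (1 ⊗ x₁)t, −(1 ⊗ x₀)s + (y₀ ⊗ 1)t)`,
one has `d¹ ∘ d⁰ = (f+g) • id` and `d⁰ ∘ d¹ = (f+g) • id`. -/
theorem tensor_matrix_factorisation
    {R : Type*} [CommRing R] (f g : R)
    (X0 X1 Y0 Y1 : Type*)
    [AddCommGroup X0] [AddCommGroup X1] [AddCommGroup Y0] [AddCommGroup Y1]
    [Module R X0] [Module R X1] [Module R Y0] [Module R Y1]
    (x0 : X0 →ₗ[R] X1) (x1 : X1 →ₗ[R] X0)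
    (y0 : Y0 →ₗ[R] Y1) (y1 : Y1 →ₗ[R] Y0)
    (hx10 : x1 ∘ₗ x0 = f • (LinearMap.id : X0 →ₗ[R] X0))
    (hx01 : x0 ∘ₗ x1 = f • (LinearMap.id : X1 →ₗ[R] X1))
    (hy10 : y1 ∘ₗ y0 = g • (LinearMap.id : Y0 →ₗ[R] Y0))
    (hy01 : y0 ∘ₗ y1 = g • (LinearMap.id : Y1 →ₗ[R] Y1))
    (d0 : (Y0 ⊗[R] X0) × (Y1 ⊗[R] X1) →ₗ[R] (Y1 ⊗[R] X0) × (Y0 ⊗[R] X1))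
    (hd0 : ∀ (u : Y0 ⊗[R] X0) (v : Y1 ⊗[R] X1),
      d0 (u, v) = (LinearMap.rTensor X0 y0 u - LinearMap.lTensor Y1 x1 v,
                   LinearMap.lTensor Y0 x0 u + LinearMap.rTensor X1 y1 v))
    (d1 : (Y1 ⊗[R] X0) × (Y0 ⊗[R] X1) →ₗ[R] (Y0 ⊗[R] X0) × (Y1 ⊗[R] X1))
    (hd1 : ∀ (s : Y1 ⊗[R] X0) (t : Y0 ⊗[R] X1),
      d1 (s, t) = (LinearMap.rTensor X0 y1 s + LinearMap.lTensor Y0 x1 t,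
                   - LinearMap.lTensor Y1 x0 s + LinearMap.rTensor X1 y0 t)) :
    d1 ∘ₗ d0 = (f + g) •
        (LinearMap.id : (Y0 ⊗[R] X0) × (Y1 ⊗[R] X1) →ₗ[R] (Y0 ⊗[R] X0) × (Y1 ⊗[R] X1)) ∧
    d0 ∘ₗ d1 = (f + g) •
        (LinearMap.id : (Y1 ⊗[R] X0) × (Y0 ⊗[R] X1) →ₗ[R] (Y1 ⊗[R] X0) × (Y0 ⊗[R] X1)) := by

  have hrX0 : ∀ u : Y0 ⊗[R] X0, LinearMap.rTensor X0 y1 (LinearMap.rTensor X0 y0 u) = g • u := by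
    intro u
    rw [← LinearMap.rTensor_comp_apply, hy10, LinearMap.rTensor_smul]
    simp
  have hrX0' : ∀ u : Y1 ⊗[R] X0, LinearMap.rTensor X0 y0 (LinearMap.rTensor X0 y1 u) = g • u := by
    intro u
    rw [← LinearMap.rTensor_comp_apply, hy01, LinearMap.rTensor_smul]
    simp
  have hrX1 : ∀ u : Y1 ⊗[R] X1, LinearMap.rTensor X1 y0 (LinearMap.rTensor X1 y1 u) = g • u := by
    intro u
    rw [← LinearMap.rTensor_comp_apply, hy01, LinearMap.rTensor_smul]
    simp
  have hrX1' : ∀ u : Y0 ⊗[R] X1, LinearMap.rTensor X1 y1 (LinearMap.rTensor X1 y0 u) = g • u := by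
    intro u
    rw [← LinearMap.rTensor_comp_apply, hy10, LinearMap.rTensor_smul]
    simp
  have hlY0 : ∀ u : Y0 ⊗[R] X1, LinearMap.lTensor Y0 x0 (LinearMap.lTensor Y0 x1 u) = f • u := by
    intro u
    rw [← LinearMap.lTensor_comp_apply, hx01, LinearMap.lTensor_smul]
    simp
  have hlY0' : ∀ u : Y0 ⊗[R] X0, LinearMap.lTensor Y0 x1 (LinearMap.lTensor Y0 x0 u) = f • u := by
    intro u
    rw [← LinearMap.lTensor_comp_apply, hx10, LinearMap.lTensor_smul]
    simp
  have hlY1 : ∀ u : Y1 ⊗[R] X0, LinearMap.lTensor Y1 x1 (LinearMap.lTensor Y1 x0 u) = f • u := by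
    intro u
    rw [← LinearMap.lTensor_comp_apply, hx10, LinearMap.lTensor_smul]
    simp
  have hlY1' : ∀ u : Y1 ⊗[R] X1, LinearMap.lTensor Y1 x0 (LinearMap.lTensor Y1 x1 u) = f • u := by
    intro u
    rw [← LinearMap.lTensor_comp_apply, hx01, LinearMap.lTensor_smul]
    simp
  have comm1 : ∀ (a : X1 →ₗ[R] X0) (b : Y0 →ₗ[R] Y1) (u : Y0 ⊗[R] X1),
      LinearMap.lTensor Y1 a (LinearMap.rTensor X1 b u)
        = LinearMap.rTensor X0 b (LinearMap.lTensor Y0 a u) := by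
    intro a b u
    rw [← LinearMap.comp_apply, ← LinearMap.comp_apply,
      LinearMap.lTensor_comp_rTensor, LinearMap.rTensor_comp_lTensor]
  have comm2 : ∀ (a : X0 →ₗ[R] X1) (b : Y1 →ₗ[R] Y0) (u : Y1 ⊗[R] X0),
      LinearMap.lTensor Y0 a (LinearMap.rTensor X0 b u)
        = LinearMap.rTensor X1 b (LinearMap.lTensor Y1 a u) := by
    intro a b u
    rw [← LinearMap.comp_apply, ← LinearMap.comp_apply,
      LinearMap.lTensor_comp_rTensor, LinearMap.rTensor_comp_lTensor]
  have comm3 : ∀ (a : X1 →ₗ[R] X0) (b : Y1 →ₗ[R] Y0) (u : Y1 ⊗[R] X1),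
      LinearMap.lTensor Y0 a (LinearMap.rTensor X1 b u)
        = LinearMap.rTensor X0 b (LinearMap.lTensor Y1 a u) := by
    intro a b u
    rw [← LinearMap.comp_apply, ← LinearMap.comp_apply,
      LinearMap.lTensor_comp_rTensor, LinearMap.rTensor_comp_lTensor]
  have comm4 : ∀ (a : X0 →ₗ[R] X1) (b : Y0 →ₗ[R] Y1) (u : Y0 ⊗[R] X0),
      LinearMap.lTensor Y1 a (LinearMap.rTensor X0 b u)
        = LinearMap.rTensor X1 b (LinearMap.lTensor Y0 a u) := by
    intro a b u
    rw [← LinearMap.comp_apply, ← LinearMap.comp_apply,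
      LinearMap.lTensor_comp_rTensor, LinearMap.rTensor_comp_lTensor]
  constructor
  · apply LinearMap.ext
    rintro ⟨u, v⟩
    simp only [LinearMap.comp_apply, hd0, hd1, LinearMap.smul_apply, LinearMap.id_apply,
      map_sub, map_add, map_neg, Prod.smul_mk, Prod.mk.injEq]
    constructor
    · rw [hrX0 u, hlY0' u, comm3 x1 y1 v, add_smul]
      abel
    · rw [hlY1' v, hrX1 v, comm4 x0 y0 u, add_smul]
      abel
  · apply LinearMap.ext
    rintro ⟨s, t⟩
    simp only [LinearMap.comp_apply, hd0, hd1, LinearMap.smul_apply, LinearMap.id_apply,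
      map_sub, map_add, map_neg, Prod.smul_mk, Prod.mk.injEq]
    constructor
    · rw [hrX0' s, hlY1 s, comm1 x1 y0 t, add_smul]
      abel
    · rw [hrX1' t, hlY0 t, comm2 x0 y1 s, add_smul]
      abel
end

section
/- Let W ∈ k[x_1,…,x_n] and V ∈ k[z_1,…,z_m], and let W ⊞ V ∈ k[x_1,…,x_n,z_1,…,z_m] = MvPolynomial (Fin n ⊕ Fin m) k denote the sum of the images of W and V under the two canonical inclusions. Then there is a k-algebra isomorphism Jac_{W⊞V} ≅ Jac_W ⊗_k Jac_V. In particular, if Jac_W and Jac_V are finite-dimensional over k then so is Jac_{W⊞V}, i.e. the sum of two potentials is again a potential (well-definedness of the monoidal product of the bicategory of Landau-Ginzburg models on objects). -/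
/-!
The partial derivatives of `W ⊞ V` in the `x`-variables are those of `W`, and in the
`z`-variables those of `V`, so the Jacobian ideal of `W ⊞ V` is generated by the images of the
Jacobian ideals of `W` and `V`. Quotienting `k[x, z] ≅ k[x] ⊗ k[z]` by such a sum of extended
ideals gives the tensor product of the two quotients, and a tensor product of
finite-dimensional algebras is finite-dimensional.
-/

open MvPolynomial

/-- The Jacobian ideal of `W`, generated by all partial derivatives of `W`. -/
noncomputable def jacIdeal {k : Type*} [CommRing k] {σ : Type*}
    (W : MvPolynomial σ k) : Ideal (MvPolynomial σ k) :=
  Ideal.span (Set.range fun i : σ => pderiv i W)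

open TensorProduct

namespace MvPolynomial

variable {R : Type*} [CommRing R] {σ τ : Type*}

theorem pderiv_rename_eq_zero_of_notMem_range {f : σ → τ} {j : τ} (hj : j ∉ Set.range f)
    (p : MvPolynomial σ R) : pderiv j (rename f p) = 0 := by
  classical
  refine pderiv_eq_zero_of_notMem_vars fun hmem => hj ?_
  obtain ⟨i, -, rfl⟩ := Finset.mem_image.mp (vars_rename f p hmem)
  exact ⟨i, rfl⟩

theorem pderiv_inl_add_rename (W : MvPolynomial σ R) (V : MvPolynomial τ R) (i : σ) :
    pderiv (Sum.inl i) (rename Sum.inl W + rename Sum.inr V) = rename Sum.inl (pderiv i W) := by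
  rw [map_add, pderiv_rename Sum.inl_injective,
    pderiv_rename_eq_zero_of_notMem_range (by simp), add_zero]

theorem pderiv_inr_add_rename (W : MvPolynomial σ R) (V : MvPolynomial τ R) (j : τ) :
    pderiv (Sum.inr j) (rename Sum.inl W + rename Sum.inr V) = rename Sum.inr (pderiv j V) := by
  rw [map_add, pderiv_rename Sum.inr_injective,
    pderiv_rename_eq_zero_of_notMem_range (by simp), zero_add]

section Quotient

variable (I : Ideal (MvPolynomial σ R)) (J : Ideal (MvPolynomial τ R))

noncomputable def sumToTensorQuotient :
    MvPolynomial (σ ⊕ τ) R →ₐ[R] (MvPolynomial σ R ⧸ I) ⊗[R] (MvPolynomial τ R ⧸ J) :=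
  aeval <| Sum.elim (fun i => Ideal.Quotient.mk I (X i) ⊗ₜ[R] 1)
    (fun j => 1 ⊗ₜ[R] Ideal.Quotient.mk J (X j))

theorem sumToTensorQuotient_comp_rename_inl :
    (sumToTensorQuotient I J).comp (rename Sum.inl) =
      Algebra.TensorProduct.includeLeft.comp (Ideal.Quotient.mkₐ R I) := by
  ext i
  simp [sumToTensorQuotient]

theorem sumToTensorQuotient_comp_rename_inr :
    (sumToTensorQuotient I J).comp (rename Sum.inr) =
      Algebra.TensorProduct.includeRight.comp (Ideal.Quotient.mkₐ R J) := by
  ext j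
  simp [sumToTensorQuotient]

theorem map_rename_sup_le_ker_sumToTensorQuotient :
    I.map (rename Sum.inl) ⊔ J.map (rename Sum.inr) ≤ RingHom.ker (sumToTensorQuotient I J) := by
  refine sup_le (Ideal.map_le_of_le_comap fun p hp => ?_) (Ideal.map_le_of_le_comap fun q hq => ?_)
  · rw [Ideal.mem_comap, RingHom.mem_ker, ← AlgHom.comp_apply, sumToTensorQuotient_comp_rename_inl]
    simp [Ideal.Quotient.eq_zero_iff_mem.mpr hp]
  · rw [Ideal.mem_comap, RingHom.mem_ker, ← AlgHom.comp_apply, sumToTensorQuotient_comp_rename_inr]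
    simp [Ideal.Quotient.eq_zero_iff_mem.mpr hq]

noncomputable def quotientSumToTensor :
    (MvPolynomial (σ ⊕ τ) R ⧸ I.map (rename Sum.inl) ⊔ J.map (rename Sum.inr)) →ₐ[R]
      (MvPolynomial σ R ⧸ I) ⊗[R] (MvPolynomial τ R ⧸ J) :=
  Ideal.Quotient.liftₐ _ (sumToTensorQuotient I J) (map_rename_sup_le_ker_sumToTensorQuotient I J)

@[simp]
theorem quotientSumToTensor_mk (p : MvPolynomial (σ ⊕ τ) R) :
    quotientSumToTensor I J (Ideal.Quotient.mk _ p) = sumToTensorQuotient I J p :=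
  rfl

noncomputable def quotientSumEquivTensor :
    (MvPolynomial (σ ⊕ τ) R ⧸ I.map (rename Sum.inl) ⊔ J.map (rename Sum.inr)) ≃ₐ[R]
      (MvPolynomial σ R ⧸ I) ⊗[R] (MvPolynomial τ R ⧸ J) :=
  AlgEquiv.ofAlgHom (quotientSumToTensor I J)
    (Algebra.TensorProduct.productMap
      (Ideal.quotientMapₐ _ (rename Sum.inl) (Ideal.map_le_iff_le_comap.mp le_sup_left))
      (Ideal.quotientMapₐ _ (rename Sum.inr) (Ideal.map_le_iff_le_comap.mp le_sup_right)))
    (by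
      apply Algebra.TensorProduct.ext <;> apply Ideal.Quotient.algHom_ext <;> ext <;>
        simp [sumToTensorQuotient])
    (by
      apply Ideal.Quotient.algHom_ext
      ext (i | j) <;> simp [sumToTensorQuotient])

end Quotient

end MvPolynomial

theorem jacIdeal_add_rename {R : Type*} [CommRing R] {σ τ : Type*}
    (W : MvPolynomial σ R) (V : MvPolynomial τ R) :
    jacIdeal (rename Sum.inl W + rename Sum.inr V) =
      (jacIdeal W).map (rename Sum.inl) ⊔ (jacIdeal V).map (rename Sum.inr) := by
  have hpderiv : (fun s => pderiv s (rename Sum.inl W + rename Sum.inr V)) =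
      Sum.elim (rename Sum.inl ∘ fun i => pderiv i W) (rename Sum.inr ∘ fun j => pderiv j V) := by
    ext1 (i | j)
    · exact pderiv_inl_add_rename W V i
    · exact pderiv_inr_add_rename W V j
  rw [jacIdeal, jacIdeal, jacIdeal, Ideal.map_span, Ideal.map_span, ← Ideal.span_union, hpderiv,
    Set.Sum.elim_range, Set.range_comp, Set.range_comp]

noncomputable def jacQuotientAddRenameEquiv {R : Type*} [CommRing R] {σ τ : Type*}
    (W : MvPolynomial σ R) (V : MvPolynomial τ R) :
    (MvPolynomial (σ ⊕ τ) R ⧸ jacIdeal (rename Sum.inl W + rename Sum.inr V)) ≃ₐ[R]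
      (MvPolynomial σ R ⧸ jacIdeal W) ⊗[R] (MvPolynomial τ R ⧸ jacIdeal V) :=
  (Ideal.quotientEquivAlgOfEq R (jacIdeal_add_rename W V)).trans
    (quotientSumEquivTensor (jacIdeal W) (jacIdeal V))

theorem jacobi_algebra_of_sum_of_potentials_general
    {k : Type*} [Field k] {n m : ℕ}
    (W : MvPolynomial (Fin n) k) (V : MvPolynomial (Fin m) k) :
    Nonempty
      ((MvPolynomial (Fin n ⊕ Fin m) k ⧸
          jacIdeal (rename Sum.inl W + rename Sum.inr V)) ≃ₐ[k]
        (TensorProduct k (MvPolynomial (Fin n) k ⧸ jacIdeal W)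
          (MvPolynomial (Fin m) k ⧸ jacIdeal V))) ∧
    (FiniteDimensional k (MvPolynomial (Fin n) k ⧸ jacIdeal W) →
      FiniteDimensional k (MvPolynomial (Fin m) k ⧸ jacIdeal V) →
      FiniteDimensional k
        (MvPolynomial (Fin n ⊕ Fin m) k ⧸
          jacIdeal (rename Sum.inl W + rename Sum.inr V))) := by
  let e := jacQuotientAddRenameEquiv W V
  exact ⟨⟨e⟩, fun _ _ => Module.Finite.equiv e.symm.toLinearEquiv⟩

/-- For `W ∈ k[x_1,…,x_n]` and `V ∈ k[z_1,…,z_m]`, there is a `k`-algebra isomorphism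
`Jac_{W⊞V} ≅ Jac_W ⊗_k Jac_V`, where `W ⊞ V` is the sum of the images of `W` and `V`
in `k[x,z]`.  In particular, if `Jac_W` and `Jac_V` are finite-dimensional over `k`,
then so is `Jac_{W⊞V}`. -/
theorem jacobi_algebra_of_sum_of_potentials
    {k : Type*} [Field k] [CharZero k] {n m : ℕ}
    (W : MvPolynomial (Fin n) k) (V : MvPolynomial (Fin m) k) :
    Nonempty
      ((MvPolynomial (Fin n ⊕ Fin m) k ⧸
          jacIdeal (rename Sum.inl W + rename Sum.inr V)) ≃ₐ[k]
        (TensorProduct k (MvPolynomial (Fin n) k ⧸ jacIdeal W)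
          (MvPolynomial (Fin m) k ⧸ jacIdeal V))) ∧
    (FiniteDimensional k (MvPolynomial (Fin n) k ⧸ jacIdeal W) →
      FiniteDimensional k (MvPolynomial (Fin m) k ⧸ jacIdeal V) →
      FiniteDimensional k
        (MvPolynomial (Fin n ⊕ Fin m) k ⧸
          jacIdeal (rename Sum.inl W + rename Sum.inr V))) :=
  jacobi_algebra_of_sum_of_potentials_general W V
end

section
/- Let W ∈ k[x_1,…,x_n] and let W + y² ∈ k[x_1,…,x_n,y] = MvPolynomial (Fin (n+1)) k denote the image of W plus the square of the extra variable y. Then there is a k-algebra isomorphism Jac_W ≅ Jac_{W+y²}, i.e. k[x_1,…,x_n]/(∂_{x_1}W, …, ∂_{x_n}W) ≅ k[x_1,…,x_n,y]/(∂_{x_1}(W+y²), …, ∂_{x_n}(W+y²), ∂_y(W+y²)). -/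
open MvPolynomial

lemma pderiv_last_rename {k : Type*} [CommRing k] {n : ℕ} (p : MvPolynomial (Fin n) k) :
    pderiv (Fin.last n) (rename Fin.castSucc p) = 0 := by
  apply pderiv_eq_zero_of_notMem_vars
  intro h
  obtain ⟨i, -, hi⟩ := mem_vars_rename _ _ h
  exact absurd hi (Fin.castSucc_lt_last i).ne

/-- Adding the square of an extra variable to a potential does not change the Jacobi
algebra: `Jac_W ≅ Jac_{W + y²}` as `k`-algebras. -/
theorem jacobi_algebra_stabilisation
    {k : Type*} [Field k] [CharZero k] {n : ℕ} (W : MvPolynomial (Fin n) k) :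
    Nonempty
      ((MvPolynomial (Fin n) k ⧸ jacIdeal W) ≃ₐ[k]
        (MvPolynomial (Fin (n + 1)) k ⧸
          jacIdeal (rename Fin.castSucc W + X (Fin.last n) ^ 2))) := by
  set W' : MvPolynomial (Fin (n + 1)) k :=
    rename Fin.castSucc W + X (Fin.last n) ^ 2 with hW'
  set J : Ideal (MvPolynomial (Fin n) k) := jacIdeal W with hJ
  set J' : Ideal (MvPolynomial (Fin (n + 1)) k) := jacIdeal W' with hJ'
  -- partial derivatives of W'
  have hpc : ∀ i : Fin n,
      pderiv (Fin.castSucc i) W' = rename Fin.castSucc (pderiv i W) := by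
    intro i
    rw [hW', map_add, pderiv_rename (Fin.castSucc_injective n), pderiv_pow,
      pderiv_X_of_ne (Fin.castSucc_lt_last i).ne']
    ring
  have hpl : pderiv (Fin.last n) W' = 2 * X (Fin.last n) := by
    rw [hW', map_add, pderiv_last_rename, pderiv_pow, pderiv_X_self]
    ring
  have hmemc : ∀ i : Fin n, rename Fin.castSucc (pderiv i W) ∈ J' := by
    intro i
    rw [← hpc i]
    exact Ideal.subset_span ⟨_, rfl⟩
  have hXlast : (X (Fin.last n) : MvPolynomial (Fin (n + 1)) k) ∈ J' := by
    have h2 : (2 : MvPolynomial (Fin (n + 1)) k) * X (Fin.last n) ∈ J' := by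
      rw [← hpl]; exact Ideal.subset_span ⟨_, rfl⟩
    have := J'.mul_mem_left (C (1 / 2 : k)) h2
    have h12 : C (1 / 2 : k) * (2 * X (Fin.last n)) = X (Fin.last n) := by
      rw [show (2 : MvPolynomial (Fin (n + 1)) k) = C (2 : k) from (map_ofNat C 2).symm,
        ← mul_assoc, ← C_mul]
      norm_num
    rwa [h12] at this
  -- forward map
  let φ0 : MvPolynomial (Fin n) k →ₐ[k] MvPolynomial (Fin (n + 1)) k ⧸ J' :=
    (Ideal.Quotient.mkₐ k J').comp
      (rename (R := k) (Fin.castSucc (n := n)) : _ →ₐ[k] _)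
  have hφ0 : ∀ a ∈ J, φ0 a = 0 := by
    intro a ha
    have : J ≤ RingHom.ker φ0.toRingHom := by
      rw [hJ, jacIdeal, Ideal.span_le]
      rintro _ ⟨i, rfl⟩
      simp only [SetLike.mem_coe, RingHom.mem_ker]
      show (Ideal.Quotient.mkₐ k J') (rename Fin.castSucc (pderiv i W)) = 0
      rw [Ideal.Quotient.mkₐ_eq_mk, Ideal.Quotient.eq_zero_iff_mem]
      exact hmemc i
    exact this ha
  let φ : MvPolynomial (Fin n) k ⧸ J →ₐ[k] MvPolynomial (Fin (n + 1)) k ⧸ J' :=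
    Ideal.Quotient.liftₐ J φ0 hφ0
  -- backward map
  let g : Fin (n + 1) → MvPolynomial (Fin n) k ⧸ J := fun j =>
    Fin.lastCases 0 (fun i => Ideal.Quotient.mk J (X i)) j
  let ψ0 : MvPolynomial (Fin (n + 1)) k →ₐ[k] MvPolynomial (Fin n) k ⧸ J :=
    aeval g
  have haeval : ∀ p : MvPolynomial (Fin n) k,
      ψ0 (rename Fin.castSucc p) = Ideal.Quotient.mk J p := by
    intro p
    show (aeval g) (rename Fin.castSucc p) = _
    rw [aeval_rename]
    have hg : (g ∘ Fin.castSucc) = fun i => Ideal.Quotient.mk J (X i) := by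
      funext i; simp [g]
    rw [hg]
    have : (aeval fun i => Ideal.Quotient.mk J (X i) :
        MvPolynomial (Fin n) k →ₐ[k] MvPolynomial (Fin n) k ⧸ J) =
        Ideal.Quotient.mkₐ k J := by
      apply MvPolynomial.algHom_ext
      intro i
      simp
    rw [this, Ideal.Quotient.mkₐ_eq_mk]
  have hψ0 : ∀ a ∈ J', ψ0 a = 0 := by
    intro a ha
    have : J' ≤ RingHom.ker ψ0.toRingHom := by
      rw [hJ', jacIdeal, Ideal.span_le]
      rintro _ ⟨j, rfl⟩
      simp only [SetLike.mem_coe, RingHom.mem_ker]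
      show ψ0 (pderiv j W') = 0
      induction j using Fin.lastCases with
      | last =>
        rw [hpl, map_mul]
        have : ψ0 (X (Fin.last n)) = 0 := by simp [ψ0, g]
        rw [this, mul_zero]
      | cast i =>
        rw [hpc i, haeval, Ideal.Quotient.eq_zero_iff_mem]
        exact Ideal.subset_span ⟨_, rfl⟩
    exact this ha
  let ψ : MvPolynomial (Fin (n + 1)) k ⧸ J' →ₐ[k] MvPolynomial (Fin n) k ⧸ J :=
    Ideal.Quotient.liftₐ J' ψ0 hψ0
  refine ⟨AlgEquiv.ofAlgHom φ ψ ?_ ?_⟩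
  · apply Ideal.Quotient.algHom_ext
    apply MvPolynomial.algHom_ext
    intro j
    induction j using Fin.lastCases with
    | last =>
      have h0 : (Ideal.Quotient.mkₐ k J') (X (Fin.last n)) = 0 := by
        rw [Ideal.Quotient.mkₐ_eq_mk, Ideal.Quotient.eq_zero_iff_mem]; exact hXlast
      simp only [AlgHom.comp_apply, Ideal.Quotient.mkₐ_eq_mk]
      rw [show (Ideal.Quotient.mk J') (X (Fin.last n)) = 0 from h0]
      simp
    | cast i =>
      simp only [AlgHom.comp_apply, Ideal.Quotient.mkₐ_eq_mk]
      have h1 : ψ (Ideal.Quotient.mk J' (X (Fin.castSucc i))) =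
          Ideal.Quotient.mk J (X i) := by
        show ψ0 (X (Fin.castSucc i)) = _
        simp [ψ0, g]
      rw [h1]
      show φ0 (X i) = _
      simp [φ0]
  · apply Ideal.Quotient.algHom_ext
    apply MvPolynomial.algHom_ext
    intro i
    simp only [AlgHom.comp_apply, Ideal.Quotient.mkₐ_eq_mk]
    have h1 : φ (Ideal.Quotient.mk J (X i)) =
        Ideal.Quotient.mk J' (X (Fin.castSucc i)) := by
      show φ0 (X i) = _
      simp [φ0]
    rw [h1]
    show ψ0 (X (Fin.castSucc i)) = _
    simp [ψ0, g]
end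

section
/- The k-algebra map k[x,x′] → Jac_W sending both x_i and x′_i to the class of x_i descends to a k-algebra isomorphism k[x,x′] / ⟨ x′_1 − x_1, …, x′_n − x_n, ∂_{[1]}W, …, ∂_{[n]}W ⟩ ≅ Jac_W. (This quotient computes End(I_W) for the unit matrix factorisation I_W, establishing the isomorphism of commutative algebras End(I_W) ≅ Jac_W, which is the algebra the extended TQFT determined by W assigns to the circle.) -/
open MvPolynomial

lemma Wi_eq_rename {k : Type*} [CommRing k] {n : ℕ} (W : MvPolynomial (Fin n) k) (m : ℕ) :
    Wi W m = rename (fun j : Fin n => if (j : ℕ) < m then Sum.inl j else Sum.inr j) W := by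
  have h : (aeval (fun j : Fin n =>
      if (j : ℕ) < m then (X (Sum.inl j) : MvPolynomial (Fin n ⊕ Fin n) k) else X (Sum.inr j)))
      = (rename (fun j : Fin n => if (j : ℕ) < m then Sum.inl j else Sum.inr j) :
          MvPolynomial (Fin n) k →ₐ[k] MvPolynomial (Fin n ⊕ Fin n) k) := by
    apply MvPolynomial.algHom_ext
    intro j
    simp only [aeval_X, rename_X]
    split_ifs <;> rfl
  simpa [Wi] using congrArg (fun F : MvPolynomial (Fin n) k →ₐ[k] _ => F W) h

/-- Key lemma: the divided difference evaluated on the diagonal is the partial derivative. -/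
lemma aeval_diag_D {k : Type*} [Field k] [CharZero k] {n : ℕ}
    (W : MvPolynomial (Fin n) k)
    (D : Fin n → MvPolynomial (Fin n ⊕ Fin n) k)
    (hD : ∀ i : Fin n,
      (X (Sum.inr i) - X (Sum.inl i)) * D i = Wi W i.val - Wi W (i.val + 1))
    (i : Fin n) :
    aeval (Sum.elim (X : Fin n → MvPolynomial (Fin n) k) X) (D i) = pderiv i W := by
  classical
  have h := congrArg (pderiv (Sum.inr i)) (hD i)
  rw [pderiv_mul, map_sub, map_sub] at h
  -- derivative of the linear factor is 1
  have h1 : ((pderiv (Sum.inr i)) (X (Sum.inr i)) - (pderiv (Sum.inr i)) (X (Sum.inl i)) :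
      MvPolynomial (Fin n ⊕ Fin n) k) = 1 := by
    simp [pderiv_X, Pi.single_apply]
  -- pderiv (inr i) (Wi W i) = rename f₁ (pderiv i W)
  have hinj : Function.Injective
      (fun j : Fin n => if (j : ℕ) < (i : ℕ) then (Sum.inl j : Fin n ⊕ Fin n) else Sum.inr j) := by
    intro a b hab
    dsimp at hab
    split_ifs at hab <;> simp_all
  have h2 : (pderiv (Sum.inr i)) (Wi W i.val) =
      rename (fun j : Fin n => if (j : ℕ) < (i : ℕ) then (Sum.inl j : Fin n ⊕ Fin n) else Sum.inr j)
        (pderiv i W) := by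
    rw [Wi_eq_rename]
    have hfi : (if (i : ℕ) < (i : ℕ) then (Sum.inl i : Fin n ⊕ Fin n) else Sum.inr i)
        = Sum.inr i := by simp
    rw [← hfi]
    exact pderiv_rename hinj i W
  have h3 : (pderiv (Sum.inr i)) (Wi W (i.val + 1)) = 0 := by
    rw [Wi_eq_rename]
    apply pderiv_eq_zero_of_notMem_vars
    intro hmem
    have := mem_vars_rename _ _ hmem
    obtain ⟨j, _, hj⟩ := this
    by_cases hji : (j : ℕ) < (i : ℕ) + 1 <;> simp [hji] at hj
    · omega
  rw [h1, h2, h3, one_mul, sub_zero] at h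
  -- now apply the diagonal evaluation
  have h4 := congrArg (aeval (Sum.elim (X : Fin n → MvPolynomial (Fin n) k) X)) h
  rw [map_add, map_mul, map_sub, aeval_X, aeval_X, aeval_rename] at h4
  have h5 : ((Sum.elim (X : Fin n → MvPolynomial (Fin n) k) X) ∘
      fun j : Fin n => if (j : ℕ) < (i : ℕ) then (Sum.inl j : Fin n ⊕ Fin n) else Sum.inr j)
      = X := by
    funext j
    simp only [Function.comp_apply]
    split_ifs <;> rfl
  rw [h5] at h4
  simpa using h4

/-- The `k`-algebra map `k[x,x′] → Jac_W` sending both `x_i` and `x′_i` to the class of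
`x_i` descends to a `k`-algebra isomorphism
`k[x,x′]/⟨x′_1 − x_1, …, x′_n − x_n, ∂_{[1]}W, …, ∂_{[n]}W⟩ ≅ Jac_W`,
where `D i = ∂_{[i]}W` are the divided differences of `W`.  (This quotient computes
`End(I_W)` for the unit matrix factorisation `I_W`, giving `End(I_W) ≅ Jac_W`.) -/
theorem end_of_unit_is_jacobi_algebra
    {k : Type*} [Field k] [CharZero k] {n : ℕ} (hn : 1 ≤ n)
    (W : MvPolynomial (Fin n) k)
    (D : Fin n → MvPolynomial (Fin n ⊕ Fin n) k)
    (hD : ∀ i : Fin n,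
      (X (Sum.inr i) - X (Sum.inl i)) * D i = Wi W i.val - Wi W (i.val + 1)) :
    ∃ e : (MvPolynomial (Fin n ⊕ Fin n) k ⧸
        Ideal.span ((Set.range fun i : Fin n =>
            (X (Sum.inr i) : MvPolynomial (Fin n ⊕ Fin n) k) - X (Sum.inl i))
          ∪ Set.range D))
        ≃ₐ[k] (MvPolynomial (Fin n) k ⧸ jacIdeal W),
      ∀ p : MvPolynomial (Fin n ⊕ Fin n) k,
        e (Ideal.Quotient.mk
            (Ideal.span ((Set.range fun i : Fin n =>
                (X (Sum.inr i) : MvPolynomial (Fin n ⊕ Fin n) k) - X (Sum.inl i))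
              ∪ Set.range D)) p)
          = Ideal.Quotient.mk (jacIdeal W)
              (aeval (Sum.elim (X : Fin n → MvPolynomial (Fin n) k) X) p) := by
  classical
  set I : Ideal (MvPolynomial (Fin n ⊕ Fin n) k) :=
    Ideal.span ((Set.range fun i : Fin n =>
        (X (Sum.inr i) : MvPolynomial (Fin n ⊕ Fin n) k) - X (Sum.inl i))
      ∪ Set.range D) with hI
  set J : Ideal (MvPolynomial (Fin n) k) := jacIdeal W with hJ
  -- the forward algebra map
  set φ : MvPolynomial (Fin n ⊕ Fin n) k →ₐ[k] MvPolynomial (Fin n) k ⧸ J :=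
    (Ideal.Quotient.mkₐ k J).comp (aeval (Sum.elim (X : Fin n → MvPolynomial (Fin n) k) X))
    with hφ
  have hφvanish : ∀ a ∈ I, φ a = 0 := by
    intro a ha
    have hle : I ≤ RingHom.ker φ := by
      rw [hI, Ideal.span_le]
      rintro p (⟨i, rfl⟩ | ⟨i, rfl⟩)
      · simp [SetLike.mem_coe, RingHom.mem_ker, hφ]
      · simp only [SetLike.mem_coe, RingHom.mem_ker, hφ, AlgHom.coe_comp, Function.comp_apply,
          Ideal.Quotient.mkₐ_eq_mk]
        rw [aeval_diag_D W D hD i]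
        rw [Ideal.Quotient.eq_zero_iff_mem, hJ, jacIdeal]
        exact Ideal.subset_span ⟨i, rfl⟩
    exact hle ha
  -- the backward algebra map
  set ψ : MvPolynomial (Fin n) k →ₐ[k] (MvPolynomial (Fin n ⊕ Fin n) k ⧸ I) :=
    (Ideal.Quotient.mkₐ k I).comp
      (rename Sum.inl : MvPolynomial (Fin n) k →ₐ[k] MvPolynomial (Fin n ⊕ Fin n) k) with hψ
  -- in the quotient by I, diagonal substitution followed by `rename inl` is the identity
  have hdiag : ∀ p : MvPolynomial (Fin n ⊕ Fin n) k,
      Ideal.Quotient.mk I (rename Sum.inl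
        (aeval (Sum.elim (X : Fin n → MvPolynomial (Fin n) k) X) p))
      = Ideal.Quotient.mk I p := by
    have key : ((Ideal.Quotient.mkₐ k I).comp
        ((rename Sum.inl : MvPolynomial (Fin n) k →ₐ[k] MvPolynomial (Fin n ⊕ Fin n) k).comp
          (aeval (Sum.elim (X : Fin n → MvPolynomial (Fin n) k) X))))
        = Ideal.Quotient.mkₐ k I := by
      apply MvPolynomial.algHom_ext
      rintro (j | j)
      · simp
      · simp only [AlgHom.coe_comp, Function.comp_apply, aeval_X, Sum.elim_inr, rename_X,
          Ideal.Quotient.mkₐ_eq_mk]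
        rw [Ideal.Quotient.mk_eq_mk_iff_sub_mem]
        have : (X (Sum.inr j) : MvPolynomial (Fin n ⊕ Fin n) k) - X (Sum.inl j) ∈ I := by
          rw [hI]
          exact Ideal.subset_span (Or.inl ⟨j, rfl⟩)
        simpa using I.neg_mem this
    intro p
    exact congrArg (fun F : MvPolynomial (Fin n ⊕ Fin n) k →ₐ[k] _ => F p) key
  have hψvanish : ∀ a ∈ J, ψ a = 0 := by
    intro a ha
    have hle : J ≤ RingHom.ker ψ := by
      rw [hJ, jacIdeal, Ideal.span_le]
      rintro p ⟨i, rfl⟩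
      simp only [SetLike.mem_coe, RingHom.mem_ker, hψ, AlgHom.coe_comp, Function.comp_apply,
        Ideal.Quotient.mkₐ_eq_mk]
      rw [← aeval_diag_D W D hD i, hdiag, Ideal.Quotient.eq_zero_iff_mem, hI]
      exact Ideal.subset_span (Or.inr ⟨i, rfl⟩)
    exact hle ha
  set F := Ideal.Quotient.liftₐ I φ hφvanish with hF
  set G := Ideal.Quotient.liftₐ J ψ hψvanish with hG
  have hFmk : ∀ p, F (Ideal.Quotient.mk I p) = φ p := fun p =>
    Ideal.Quotient.liftₐ_apply I φ hφvanish (Ideal.Quotient.mk I p)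
  have hGmk : ∀ p, G (Ideal.Quotient.mk J p) = ψ p := fun p =>
    Ideal.Quotient.liftₐ_apply J ψ hψvanish (Ideal.Quotient.mk J p)
  have hFG : F.comp G = AlgHom.id k _ := by
    apply Ideal.Quotient.algHom_ext
    apply MvPolynomial.algHom_ext
    intro j
    simp only [AlgHom.coe_comp, Function.comp_apply, Ideal.Quotient.mkₐ_eq_mk, AlgHom.coe_id,
      id_eq]
    rw [hGmk]
    simp only [hψ, AlgHom.coe_comp, Function.comp_apply, rename_X, Ideal.Quotient.mkₐ_eq_mk]
    rw [hFmk]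
    simp [hφ]
  have hGF : G.comp F = AlgHom.id k _ := by
    apply Ideal.Quotient.algHom_ext
    apply MvPolynomial.algHom_ext
    rintro (j | j)
    · simp only [AlgHom.coe_comp, Function.comp_apply, Ideal.Quotient.mkₐ_eq_mk, AlgHom.coe_id,
        id_eq]
      rw [hFmk]
      simp only [hφ, AlgHom.coe_comp, Function.comp_apply, aeval_X, Sum.elim_inl,
        Ideal.Quotient.mkₐ_eq_mk]
      rw [hGmk]
      simp [hψ]
    · simp only [AlgHom.coe_comp, Function.comp_apply, Ideal.Quotient.mkₐ_eq_mk, AlgHom.coe_id,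
        id_eq]
      rw [hFmk]
      simp only [hφ, AlgHom.coe_comp, Function.comp_apply, aeval_X, Sum.elim_inr,
        Ideal.Quotient.mkₐ_eq_mk]
      rw [hGmk]
      simp only [hψ, AlgHom.coe_comp, Function.comp_apply, rename_X, Ideal.Quotient.mkₐ_eq_mk]
      rw [Ideal.Quotient.mk_eq_mk_iff_sub_mem]
      have : (X (Sum.inr j) : MvPolynomial (Fin n ⊕ Fin n) k) - X (Sum.inl j) ∈ I := by
        rw [hI]
        exact Ideal.subset_span (Or.inl ⟨j, rfl⟩)
      simpa using I.neg_mem this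
  refine ⟨AlgEquiv.ofAlgHom F G hFG hGF, fun p => ?_⟩
  show F (Ideal.Quotient.mk I p) = _
  rw [hFmk]
  simp [hφ]
end
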